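/- Let R > 0 and let w : (0,R) → ℝ be continuously differentiable with ∫₀^R (w(r)²/r) dr < ∞ and ∫₀^R w'(r)² r dr < ∞. Then for all 0 < r₁ < r₂ < R one has |w(r₂)² − w(r₁)²| ≤ 2 ( ∫_{r₁}^{r₂} (w²/r) dr )^{1/2} ( ∫_{r₁}^{r₂} w'² r dr )^{1/2}, and consequently w extends continuously to [0,R) with lim_{r→0⁺} w(r) = 0. -/

import Mathlib

open Real MeasureTheory Set Filter Topology

/-!
Writing `w(r₂)² − w(r₁)² = ∫ 2 w w'` and splitting `w w' = (w / √r) (w' √r)`, Cauchy–Schwarz gives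
the bound. By AM–GM the bound is at most `∫₀^{r₂} (w²/r + w'² r)`, which tends to `0` with `r₂`, so
the oscillation of `w²` near the origin dies out. Since `1/r` is not integrable at `0`, finiteness
of `∫ w²/r` forces `w²` to be small at points arbitrarily close to `0`; together, `w² → 0`.
-/

theorem abs_integral_mul_le_sqrt_mul_sqrt {α : Type*} [MeasurableSpace α] {μ : Measure α}
    {f g : α → ℝ} (hf : MemLp f 2 μ) (hg : MemLp g 2 μ) :
    |∫ a, f a * g a ∂μ| ≤ √(∫ a, f a ^ 2 ∂μ) * √(∫ a, g a ^ 2 ∂μ) := by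
  have hf' : MemLp f (ENNReal.ofReal 2) μ := by simpa using hf
  have hg' : MemLp g (ENNReal.ofReal 2) μ := by simpa using hg
  have hHolder := integral_mul_norm_le_Lp_mul_Lq HolderConjugate.two_two hf' hg'
  simp only [norm_eq_abs, rpow_two, sq_abs, ← sqrt_eq_rpow] at hHolder
  calc |∫ a, f a * g a ∂μ| ≤ ∫ a, |f a * g a| ∂μ := abs_integral_le_integral_abs
    _ ≤ _ := by simpa only [abs_mul] using hHolder

theorem abs_setIntegral_mul_le_sqrt_div_mul_sqrt_mul {s : Set ℝ} (hs : MeasurableSet s)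
    (hs_pos : s ⊆ Ioi 0) {u v : ℝ → ℝ} (hu : AEStronglyMeasurable u (volume.restrict s))
    (hv : AEStronglyMeasurable v (volume.restrict s))
    (hu2 : IntegrableOn (fun r => u r ^ 2 / r) s) (hv2 : IntegrableOn (fun r => v r ^ 2 * r) s) :
    |∫ r in s, u r * v r| ≤ √(∫ r in s, u r ^ 2 / r) * √(∫ r in s, v r ^ 2 * r) := by
  have hsq : ∀ r ∈ s, u r ^ 2 / r = (u r / √r) ^ 2 ∧ v r ^ 2 * r = (v r * √r) ^ 2 ∧
      u r * v r = u r / √r * (v r * √r) := by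
    intro r hr
    have hr0 : 0 < r := hs_pos hr
    refine ⟨by rw [div_pow, sq_sqrt hr0.le], by rw [mul_pow, sq_sqrt hr0.le], ?_⟩
    field_simp [(sqrt_pos.2 hr0).ne']
  have hf : MemLp (fun r => u r / √r) 2 (volume.restrict s) :=
    (memLp_two_iff_integrable_sq (hu.div₀ continuous_sqrt.aestronglyMeasurable)).2 <|
      hu2.congr_fun (fun r hr => (hsq r hr).1) hs
  have hg : MemLp (fun r => v r * √r) 2 (volume.restrict s) :=
    (memLp_two_iff_integrable_sq (hv.mul continuous_sqrt.aestronglyMeasurable)).2 <|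
      hv2.congr_fun (fun r hr => (hsq r hr).2.1) hs
  rw [setIntegral_congr_fun hs fun r hr => (hsq r hr).1,
    setIntegral_congr_fun hs fun r hr => (hsq r hr).2.1,
    setIntegral_congr_fun hs fun r hr => (hsq r hr).2.2]
  exact abs_integral_mul_le_sqrt_mul_sqrt hf hg

theorem sq_sub_sq_eq_two_mul_setIntegral {w : ℝ → ℝ} {U : Set ℝ} (hU : IsOpen U)
    (hw : ContDiffOn ℝ 1 w U) {a b : ℝ} (hab : a ≤ b) (hsub : Icc a b ⊆ U) :
    w b ^ 2 - w a ^ 2 = 2 * ∫ r in Ioo a b, w r * deriv w r := by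
  have hderiv : ∀ x ∈ uIcc a b, HasDerivAt (fun y => w y ^ 2) (2 * (w x * deriv w x)) x := by
    intro x hx
    rw [uIcc_of_le hab] at hx
    have hd := (hw.differentiableOn one_ne_zero x (hsub hx)).differentiableAt
      (hU.mem_nhds (hsub hx))
    simpa [mul_assoc] using hd.hasDerivAt.fun_pow 2
  have hcont : ContinuousOn (fun x => w x * deriv w x) (uIcc a b) := by
    rw [uIcc_of_le hab]
    exact (hw.continuousOn.mono hsub).mul
      ((hw.continuousOn_deriv_of_isOpen hU le_rfl).mono hsub)
  rw [← intervalIntegral.integral_eq_sub_of_hasDerivAt hderiv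
    (hcont.intervalIntegrable.const_mul 2), intervalIntegral.integral_const_mul,
    intervalIntegral.integral_of_le hab, integral_Ioc_eq_integral_Ioo]

theorem abs_sq_sub_sq_le {w : ℝ → ℝ} {U : Set ℝ} (hU : IsOpen U)
    (hw : ContDiffOn ℝ 1 w U) {a b : ℝ} (ha : 0 < a) (hab : a ≤ b) (hsub : Icc a b ⊆ U) :
    |w b ^ 2 - w a ^ 2| ≤
      2 * √(∫ r in Ioo a b, w r ^ 2 / r) * √(∫ r in Ioo a b, deriv w r ^ 2 * r) := by
  have hpos : Icc a b ⊆ Ioi 0 := fun r hr => ha.trans_le hr.1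
  have hwc : ContinuousOn w (Icc a b) := hw.continuousOn.mono hsub
  have hdc : ContinuousOn (deriv w) (Icc a b) :=
    (hw.continuousOn_deriv_of_isOpen hU le_rfl).mono hsub
  have hmeas {f : ℝ → ℝ} (hf : ContinuousOn f (Icc a b)) :
      AEStronglyMeasurable f (volume.restrict (Ioo a b)) :=
    (hf.mono Ioo_subset_Icc_self).aestronglyMeasurable measurableSet_Ioo
  have hint {f : ℝ → ℝ} (hf : ContinuousOn f (Icc a b)) : IntegrableOn f (Ioo a b) :=
    (hf.integrableOn_compact isCompact_Icc).mono_set Ioo_subset_Icc_self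
  rw [sq_sub_sq_eq_two_mul_setIntegral hU hw hab hsub, abs_mul, abs_two, mul_assoc]
  gcongr
  exact abs_setIntegral_mul_le_sqrt_div_mul_sqrt_mul measurableSet_Ioo
    (Ioo_subset_Icc_self.trans hpos) (hmeas hwc) (hmeas hdc)
    (hint ((hwc.pow 2).div continuousOn_id fun r hr => (hpos hr).ne'))
    (hint ((hdc.pow 2).mul continuousOn_id))

theorem frequently_abs_lt_of_integrableOn_div {f : ℝ → ℝ} {d : ℝ} (hd : 0 < d)
    (hf : IntegrableOn (fun r => f r / r) (Ioo 0 d)) {ε : ℝ} (hε : 0 < ε) :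
    ∃ᶠ r in 𝓝[>] 0, |f r| < ε := by
  intro hlarge
  obtain ⟨δ, hδ, hδlarge⟩ := (nhdsGT_basis 0).eventually_iff.1 hlarge
  set c := min δ d
  have hc : 0 < c := lt_min hδ hd
  have hinv : IntegrableOn (fun r : ℝ => r⁻¹) (Ioo 0 c) := by
    refine Integrable.mono'
      ((hf.mono_set (Ioo_subset_Ioo_right (min_le_right _ _))).norm.const_mul ε⁻¹)
      measurable_inv.aestronglyMeasurable ((ae_restrict_iff' measurableSet_Ioo).2
        (Eventually.of_forall fun r hr => ?_))
    have hfr : ε ≤ |f r| := not_lt.1 (hδlarge ⟨hr.1, hr.2.trans_le (min_le_left _ _)⟩)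
    rw [norm_inv, norm_div, norm_eq_abs, norm_eq_abs, abs_of_pos hr.1]
    calc r⁻¹ = ε⁻¹ * (ε / r) := by field_simp
      _ ≤ ε⁻¹ * (|f r| / r) := by gcongr; exact hr.1.le
  have hinv' := (intervalIntegrable_iff_integrableOn_Ioo_of_le hc.le).2 hinv
  rw [intervalIntegrable_inv_iff, uIcc_of_le hc.le] at hinv'
  exact hinv'.elim hc.ne fun h => h ⟨le_rfl, hc.le⟩

theorem tendsto_setIntegral_Ioo_zero_nhdsGT {f : ℝ → ℝ} {R : ℝ} (hR : 0 < R)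
    (hf : IntegrableOn f (Ioo 0 R)) :
    Tendsto (fun y => ∫ r in Ioo 0 y, f r) (𝓝[>] 0) (𝓝 0) := by
  have hvol : Tendsto (fun y : ℝ => volume.restrict (Ioo 0 R) (Ioo 0 y)) (𝓝[>] 0) (𝓝 0) := by
    have hlen : Tendsto ENNReal.ofReal (𝓝[>] 0) (𝓝 0) := by
      simpa using (ENNReal.tendsto_ofReal tendsto_id).mono_left (nhdsWithin_le_nhds (a := 0))
    refine tendsto_of_tendsto_of_tendsto_of_le_of_le tendsto_const_nhds hlen
      (fun _ => bot_le) fun y => ?_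
    exact (Measure.restrict_apply_le _ _).trans (by simp)
  refine (hf.tendsto_setIntegral_nhds_zero hvol).congr' ?_
  filter_upwards [Ioo_mem_nhdsGT hR] with y hy
  rw [Measure.restrict_restrict measurableSet_Ioo, Ioo_inter_Ioo, max_self, min_eq_left hy.2.le]

theorem tendsto_nhdsGT_zero_of_abs_sub_le {g H : ℝ → ℝ}
    (hH : Tendsto H (𝓝[>] 0) (𝓝 0)) (hsmall : ∀ ε > 0, ∃ᶠ y in 𝓝[>] 0, |g y| < ε)
    (hosc : ∀ᶠ y in 𝓝[>] 0, ∀ x ∈ Ioo 0 y, |g y - g x| ≤ H y) :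
    Tendsto g (𝓝[>] 0) (𝓝 0) := by
  rw [(nhdsGT_basis 0).tendsto_iff Metric.nhds_basis_ball]
  intro ε hε
  obtain ⟨y, hgy, ⟨hHy, hosc_y⟩, hy⟩ := ((hsmall (ε / 2) (half_pos hε)).and_eventually
    (((hH.eventually (gt_mem_nhds (half_pos hε))).and hosc).and self_mem_nhdsWithin)).exists
  refine ⟨y, hy, fun x hx => ?_⟩
  rw [Metric.mem_ball, dist_zero_right, norm_eq_abs]
  calc |g x| ≤ |g y| + |g y - g x| := by
        linarith [abs_sub_abs_le_abs_sub (g x) (g y), abs_sub_comm (g x) (g y)]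
    _ < ε / 2 + ε / 2 := add_lt_add_of_lt_of_le hgy ((hosc_y x hx).trans hHy.le)
    _ = ε := add_halves ε

theorem abs_sq_sub_sq_le_setIntegral_Ioo_zero {w : ℝ → ℝ} {R : ℝ}
    (hw : ContDiffOn ℝ 1 w (Ioo 0 R)) (h1 : IntegrableOn (fun r => w r ^ 2 / r) (Ioo 0 R))
    (h2 : IntegrableOn (fun r => deriv w r ^ 2 * r) (Ioo 0 R)) {x y : ℝ} (hx : 0 < x)
    (hxy : x < y) (hyR : y < R) :
    |w y ^ 2 - w x ^ 2| ≤
      (∫ r in Ioo 0 y, w r ^ 2 / r) + ∫ r in Ioo 0 y, deriv w r ^ 2 * r := by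
  have hmono {f : ℝ → ℝ} (hf : IntegrableOn f (Ioo 0 R)) (hf0 : ∀ r ∈ Ioo 0 R, 0 ≤ f r) :
      0 ≤ ∫ r in Ioo x y, f r ∧ ∫ r in Ioo x y, f r ≤ ∫ r in Ioo 0 y, f r := by
    have hsub : Ioo 0 y ⊆ Ioo 0 R := Ioo_subset_Ioo_right hyR.le
    refine ⟨setIntegral_nonneg measurableSet_Ioo fun r hr =>
        hf0 r ⟨hx.trans hr.1, hr.2.trans hyR⟩,
      setIntegral_mono_set (hf.mono_set hsub)
        ((ae_restrict_iff' measurableSet_Ioo).2 (.of_forall fun r hr => hf0 r (hsub hr)))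
        (Ioo_subset_Ioo_left hx.le).eventuallyLE⟩
  obtain ⟨hA0, hA⟩ := hmono h1 fun r hr => div_nonneg (sq_nonneg _) hr.1.le
  obtain ⟨hB0, hB⟩ := hmono h2 fun r hr => mul_nonneg (sq_nonneg _) hr.1.le
  calc |w y ^ 2 - w x ^ 2|
      ≤ 2 * √(∫ r in Ioo x y, w r ^ 2 / r) * √(∫ r in Ioo x y, deriv w r ^ 2 * r) :=
        abs_sq_sub_sq_le isOpen_Ioo hw hx hxy.le fun r hr => ⟨hx.trans_le hr.1, hr.2.trans_lt hyR⟩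
    _ ≤ √(∫ r in Ioo x y, w r ^ 2 / r) ^ 2 + √(∫ r in Ioo x y, deriv w r ^ 2 * r) ^ 2 :=
        two_mul_le_add_sq _ _
    _ ≤ _ := by
        rw [sq_sqrt hA0, sq_sqrt hB0]
        exact add_le_add hA hB

theorem radial_component_vanishes_at_origin
    (R : ℝ) (hR : 0 < R) (w : ℝ → ℝ)
    (hw : ContDiffOn ℝ 1 w (Set.Ioo 0 R))
    (h1 : IntegrableOn (fun r => (w r)^2 / r) (Set.Ioo 0 R))
    (h2 : IntegrableOn (fun r => (deriv w r)^2 * r) (Set.Ioo 0 R)) :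
    (∀ r1 r2 : ℝ, 0 < r1 → r1 < r2 → r2 < R →
      |(w r2)^2 - (w r1)^2| ≤
        2 * Real.sqrt (∫ r in Set.Ioo r1 r2, (w r)^2 / r) *
          Real.sqrt (∫ r in Set.Ioo r1 r2, (deriv w r)^2 * r)) ∧
    Filter.Tendsto w (nhdsWithin 0 (Set.Ioi 0)) (nhds 0) := by
  refine ⟨fun r1 r2 hr1 hr12 hr2 => abs_sq_sub_sq_le isOpen_Ioo hw hr1 hr12.le
    fun r hr => ⟨hr1.trans_le hr.1, hr.2.trans_lt hr2⟩, ?_⟩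
  have htail : Tendsto (fun y => (∫ r in Ioo 0 y, w r ^ 2 / r) +
      ∫ r in Ioo 0 y, deriv w r ^ 2 * r) (𝓝[>] 0) (𝓝 0) := by
    simpa using (tendsto_setIntegral_Ioo_zero_nhdsGT hR h1).add
      (tendsto_setIntegral_Ioo_zero_nhdsGT hR h2)
  have hosc : ∀ᶠ y in 𝓝[>] 0, ∀ x ∈ Ioo 0 y, |w y ^ 2 - w x ^ 2| ≤
      (∫ r in Ioo 0 y, w r ^ 2 / r) + ∫ r in Ioo 0 y, deriv w r ^ 2 * r := by
    filter_upwards [Ioo_mem_nhdsGT hR] with y hy x hx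
    exact abs_sq_sub_sq_le_setIntegral_Ioo_zero hw h1 h2 hx.1 hx.2 hy.2
  have hsq : Tendsto (fun r => w r ^ 2) (𝓝[>] 0) (𝓝 0) :=
    tendsto_nhdsGT_zero_of_abs_sub_le htail
      (fun ε hε => frequently_abs_lt_of_integrableOn_div hR h1 hε) hosc
  have habs : Tendsto (fun r => |w r|) (𝓝[>] 0) (𝓝 0) := by
    simpa [sqrt_sq_eq_abs] using hsq.sqrt
  exact (tendsto_zero_iff_abs_tendsto_zero w).2 habs
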